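/- If a vector β ∈ ℝⁿ belongs to the cone Γ_k (i.e. σ_1(β) > 0, ..., σ_k(β) > 0), then the sum of any n-k+1 of its coordinates is nonnegative. -/

import Mathlib

/-!
Let `P(t) = ∏ (t + βᵢ) = ∑ⱼ σⱼ(β) tⁿ⁻ʲ`. Its `(n - k)`-th derivative has degree `k`, its
coefficients are positive multiples of `σ₀, …, σ_k`, and by Rolle it is real-rooted; hence
`β ∈ Γ_k` iff all roots of `P⁽ⁿ⁻ᵏ⁾` are negative. Removing a coordinate `a` writes
`P = (t + a) Q`, and at the largest root `v` of `Q⁽ᵈ⁾` we get `P⁽ᵈ⁾(v) = d · Q⁽ᵈ⁻¹⁾(v) ≤ 0`,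
because a real-rooted polynomial with positive leading coefficient is nonpositive at its
largest critical point. So `v < 0`: dropping a coordinate maps `Γ_k` into `Γ_{k-1}`. Dropping
`k - 1` coordinates lands in `Γ_1`, where the remaining coordinates have positive sum.
-/

open Finset

/-- The `k`-th elementary symmetric polynomial of a vector in `ℝⁿ`. -/
noncomputable def esym (n k : ℕ) (x : Fin n → ℝ) : ℝ :=
  ∑ t ∈ Finset.powersetCard k (Finset.univ : Finset (Fin n)), ∏ i ∈ t, x i

open Polynomial

namespace Multiset

variable {R : Type*} [CommSemiring R]

@[simp] lemma esymm_zero (s : Multiset R) : s.esymm 0 = 1 := by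
  simp [esymm]

lemma esymm_one (s : Multiset R) : s.esymm 1 = s.sum := by
  simp [esymm, powersetCard_one]

lemma esymm_eq_zero_of_card_lt {s : Multiset R} {j : ℕ} (h : card s < j) : s.esymm j = 0 := by
  simp [esymm, powersetCard_eq_empty j h]

lemma esymm_pos [PartialOrder R] [IsStrictOrderedRing R] {s : Multiset R}
    (hs : ∀ a ∈ s, 0 < a) {j : ℕ} (hj : j ≤ card s) : 0 < s.esymm j := by
  have hne : s.powersetCard j ≠ 0 := by
    rw [← card_pos, card_powersetCard]; exact Nat.choose_pos hj
  simpa [esymm] using sum_lt_sum_of_nonempty hne (f := fun _ => (0 : R)) (g := prod)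
    fun t ht => prod_pos fun a ha => hs a (mem_of_le (mem_powersetCard.1 ht).1 ha)

end Multiset

namespace Polynomial

lemma natDegree_iterate_derivative_eq {R : Type*} [Semiring R] [IsAddTorsionFree R] (p : R[X])
    (j : ℕ) : (derivative^[j] p).natDegree = p.natDegree - j := by
  induction j with
  | zero => rfl
  | succ j ih => rw [Function.iterate_succ_apply', natDegree_derivative, ih]; omega

section Field

variable {K : Type*} [Field K]

lemma Splits.coeff_taylor {q : K[X]} (hq : q.Splits) (x : K) {i : ℕ} (hi : i ≤ q.natDegree) :
    (q.taylor x).coeff i = q.leadingCoeff * (q.roots.map (x - ·)).esymm (q.natDegree - i) := by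
  have htaylor : q.taylor x = C q.leadingCoeff * (q.roots.map fun w => X + C (x - w)).prod := by
    conv_lhs => rw [taylor_apply, hq.eq_prod_roots]
    rw [mul_comp, C_comp, multiset_prod_comp, Multiset.map_map]
    congr 2
    refine Multiset.map_congr rfl fun w _ => ?_
    simp only [Function.comp_apply, sub_comp, X_comp, C_comp, C_sub]
    ring
  rw [htaylor, coeff_C_mul, Multiset.prod_X_add_C_coeff' _ _ (by rwa [splits_iff_card_roots.1 hq]),
    splits_iff_card_roots.1 hq]

variable [LinearOrder K] [IsStrictOrderedRing K]

lemma Splits.coeff_taylor_pos {q : K[X]} (hq : q.Splits) (hlc : 0 < q.leadingCoeff) {x : K}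
    (hroots : ∀ w ∈ q.roots, w < x) {i : ℕ} (hi : i ≤ q.natDegree) : 0 < (q.taylor x).coeff i := by
  rw [hq.coeff_taylor x hi]
  refine mul_pos hlc (Multiset.esymm_pos ?_ ?_)
  · exact Multiset.forall_mem_map_iff.2 fun w hw => sub_pos.2 (hroots w hw)
  · rw [Multiset.card_map, splits_iff_card_roots.1 hq]; omega

lemma Splits.eval_derivative_pos {q : K[X]} (hq : q.Splits) (hlc : 0 < q.leadingCoeff)
    (hdeg : q.natDegree ≠ 0) {x : K} (hroots : ∀ w ∈ q.roots, w < x) :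
    0 < q.derivative.eval x := by
  rw [← taylor_coeff_one]
  exact hq.coeff_taylor_pos hlc hroots (Nat.one_le_iff_ne_zero.2 hdeg)

lemma leadingCoeff_iterate_derivative_pos [CharZero K] {q : K[X]} (hlc : 0 < q.leadingCoeff)
    {j : ℕ} (hj : j ≤ q.natDegree) : 0 < (derivative^[j] q).leadingCoeff := by
  induction j with
  | zero => exact hlc
  | succ j ih =>
    rw [Function.iterate_succ_apply', leadingCoeff_derivative, natDegree_iterate_derivative_eq]
    exact mul_pos (ih (by omega)) (Nat.cast_pos.2 (by omega))

end Field

lemma Splits.derivative {q : ℝ[X]} (hq : q.Splits) : q.derivative.Splits := by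
  rcases eq_or_ne q.derivative 0 with h | h
  · rw [h]; exact Splits.zero
  rw [splits_iff_card_roots] at hq ⊢
  have := q.card_roots_le_derivative
  have := natDegree_derivative_le q
  have := card_roots' q.derivative
  have := derivative_ne_zero.1 h
  omega

lemma Splits.iterate_derivative {q : ℝ[X]} (hq : q.Splits) (j : ℕ) :
    (Polynomial.derivative^[j] q).Splits := by
  induction j with
  | zero => exact hq
  | succ j ih => rw [Function.iterate_succ_apply']; exact ih.derivative

lemma Splits.eval_nonpos_of_max_root_derivative {q : ℝ[X]} (hq : q.Splits)
    (hlc : 0 < q.leadingCoeff) {v : ℝ} (hv : v ∈ q.derivative.roots)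
    (hmax : ∀ u ∈ q.derivative.roots, u ≤ v) : q.eval v ≤ 0 := by
  by_contra! hqv
  have hdeg : q.natDegree ≠ 0 := derivative_ne_zero.1 (ne_zero_of_mem_roots hv)
  obtain ⟨w, hw, hwmax⟩ := Multiset.exists_max_image id (hq.roots_ne_zero hdeg)
  have hqw : q.eval w = 0 := (mem_roots'.1 hw).2
  have hvw : v < w := by
    by_contra! hwv
    have hwv : w < v := hwv.lt_of_ne fun h => by rw [h] at hqw; linarith
    exact (hq.eval_derivative_pos hlc hdeg fun u hu => (hwmax u hu).trans_lt hwv).ne'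
      (mem_roots'.1 hv).2
  -- `q'` is negative somewhere in `(v, w)` by the mean value theorem and positive beyond the
  -- largest root `w`, so it vanishes somewhere above `v`.
  obtain ⟨c, hc, hc'⟩ := exists_hasDerivAt_eq_slope (fun t => q.eval t)
    (fun t => q.derivative.eval t) hvw q.continuousOn (fun t _ => q.hasDerivAt t)
  have hc_neg : q.derivative.eval c < 0 := by
    rw [hc', hqw]; exact div_neg_of_neg_of_pos (by linarith) (by linarith)
  have hfar : 0 < q.derivative.eval (w + 1) :=
    hq.eval_derivative_pos hlc hdeg fun u hu => (hwmax u hu).trans_lt (lt_add_one w)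
  obtain ⟨u, hu, hu0⟩ := intermediate_value_Ioo (by linarith [hc.2]) q.derivative.continuousOn
    ⟨hc_neg, hfar⟩
  have hu_root : u ∈ q.derivative.roots := mem_roots'.2 ⟨ne_zero_of_mem_roots hv, hu0⟩
  linarith [hmax u hu_root, hu.1, hc.1]

lemma monic_multiset_prod_X_add_C {R : Type*} [CommSemiring R] (M : Multiset R) :
    (M.map fun r => X + C r).prod.Monic :=
  monic_multiset_prod_of_monic _ _ fun r _ => monic_X_add_C r

lemma natDegree_multiset_prod_X_add_C {R : Type*} [CommSemiring R] [Nontrivial R]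
    (M : Multiset R) : (M.map fun r => X + C r).prod.natDegree = Multiset.card M := by
  rw [natDegree_multiset_prod_of_monic _
    (Multiset.forall_mem_map_iff.2 fun r _ => monic_X_add_C r), Multiset.map_map]
  simp

lemma splits_multiset_prod_X_add_C {K : Type*} [Field K] (M : Multiset K) :
    (M.map fun r => X + C r).prod.Splits :=
  Splits.multisetProd (Multiset.forall_mem_map_iff.2 fun r _ => Splits.X_add_C r)

lemma coeff_iterate_derivative_multiset_prod_X_add_C {R : Type*} [CommSemiring R]
    (M : Multiset R) {i d : ℕ} (h : i + d ≤ Multiset.card M) :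
    (derivative^[d] (M.map fun r => X + C r).prod).coeff i
      = (i + d).descFactorial d • M.esymm (Multiset.card M - (i + d)) := by
  rw [coeff_iterate_derivative, Multiset.prod_X_add_C_coeff M h]

lemma iterate_derivative_X_add_C_mul {R : Type*} [CommSemiring R] (a : R) (Q : R[X]) (d : ℕ) :
    derivative^[d] ((X + C a) * Q) = (X + C a) * derivative^[d] Q + d • derivative^[d - 1] Q := by
  rw [add_mul, iterate_map_add, mul_comm X, iterate_derivative_mul_X, iterate_derivative_C_mul]
  ring

lemma eval_pos_of_coeff_pos {R : Type*} [CommSemiring R] [PartialOrder R] [IsStrictOrderedRing R]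
    {p : R[X]} {n : ℕ} (hp : p.natDegree < n) (hcoeff : ∀ i < n, 0 < p.coeff i) {t : R}
    (ht : 0 ≤ t) : 0 < p.eval t := by
  rw [eval_eq_sum_range' hp]
  refine Finset.sum_pos' (fun i hi => mul_nonneg (hcoeff i (Finset.mem_range.1 hi)).le
    (pow_nonneg ht i)) ⟨0, Finset.mem_range.2 (by omega), by simpa using hcoeff 0 (by omega)⟩

lemma roots_iterate_derivative_neg_of_X_add_C_mul {Q : ℝ[X]} (hQ : Q.Splits)
    (hlc : 0 < Q.leadingCoeff) {a : ℝ} {d : ℕ}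
    (hP : ∀ t, 0 ≤ t → 0 < (derivative^[d] ((X + C a) * Q)).eval t) :
    ∀ x ∈ (derivative^[d] Q).roots, x < 0 := by
  intro x hx
  by_contra! hx0
  obtain ⟨v, hv, hvmax⟩ := Multiset.exists_max_image id
    (Multiset.card_pos.1 (Multiset.card_pos_iff_exists_mem.2 ⟨x, hx⟩))
  have hPv := hP v (hx0.trans (hvmax x hx))
  rw [iterate_derivative_X_add_C_mul, eval_add, eval_mul, (mem_roots'.1 hv).2, mul_zero,
    zero_add, eval_smul, nsmul_eq_mul] at hPv
  cases d with
  | zero => simp at hPv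
  | succ e =>
    have hd : e + 1 ≤ Q.natDegree := by
      by_contra!
      exact ne_zero_of_mem_roots hv (iterate_derivative_eq_zero this)
    rw [Function.iterate_succ_apply'] at hv hvmax
    have hW := (hQ.iterate_derivative e).eval_nonpos_of_max_root_derivative
      (leadingCoeff_iterate_derivative_pos hlc (by omega)) hv hvmax
    simp only [Nat.cast_add, Nat.cast_one, add_tsub_cancel_right] at hPv
    nlinarith

end Polynomial

-- Gårding's cone `Γ_k` on multisets of reals; the index `j = 0` is harmless as `σ_0 = 1`.
def gammaCone (k : ℕ) : Set (Multiset ℝ) := {M | ∀ j ≤ k, 0 < M.esymm j}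

lemma le_card_of_mem_gammaCone {k : ℕ} {M : Multiset ℝ} (hM : M ∈ gammaCone k) :
    k ≤ Multiset.card M := by
  by_contra! h
  exact (hM k le_rfl).ne' (Multiset.esymm_eq_zero_of_card_lt h)

lemma eval_iterate_derivative_pos_of_mem_gammaCone {k : ℕ} {M : Multiset ℝ}
    (hM : M ∈ gammaCone k) {t : ℝ} (ht : 0 ≤ t) :
    0 < (derivative^[Multiset.card M - k] (M.map fun r => X + C r).prod).eval t := by
  have hk := le_card_of_mem_gammaCone hM
  refine eval_pos_of_coeff_pos (n := k + 1) ?_ (fun i hi => ?_) ht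
  · have := natDegree_iterate_derivative (M.map fun r => X + C r).prod (Multiset.card M - k)
    rw [natDegree_multiset_prod_X_add_C] at this
    omega
  · rw [coeff_iterate_derivative_multiset_prod_X_add_C M (by omega), nsmul_eq_mul]
    exact mul_pos (Nat.cast_pos.2 (Nat.descFactorial_pos.2 (by omega))) (hM _ (by omega))

lemma mem_gammaCone_of_roots_neg {k : ℕ} {M : Multiset ℝ} (hk : k ≤ Multiset.card M)
    (hroots : ∀ x ∈ (derivative^[Multiset.card M - k] (M.map fun r => X + C r).prod).roots,
      x < 0) :
    M ∈ gammaCone k := by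
  set d := Multiset.card M - k
  set R := derivative^[d] (M.map fun r => X + C r).prod
  have hsplits : R.Splits := (splits_multiset_prod_X_add_C M).iterate_derivative d
  have hcoeff : ∀ i ≤ k, R.coeff i = (i + d).descFactorial d • M.esymm (k - i) := by
    intro i hi
    rw [coeff_iterate_derivative_multiset_prod_X_add_C M (by omega)]
    congr 2
    omega
  have hlead : 0 < R.coeff k := by
    rw [hcoeff k le_rfl, Nat.sub_self, Multiset.esymm_zero, nsmul_eq_mul, mul_one]
    exact Nat.cast_pos.2 (Nat.descFactorial_pos.2 (by omega))
  have hdeg : R.natDegree = k := by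
    refine le_antisymm ?_ (le_natDegree_of_ne_zero hlead.ne')
    have : R.natDegree ≤ _ := natDegree_iterate_derivative _ d
    rw [natDegree_multiset_prod_X_add_C] at this
    omega
  intro j hj
  have := hsplits.coeff_taylor_pos (by rwa [leadingCoeff, hdeg]) hroots (i := k - j) (by omega)
  rw [taylor_zero, hcoeff (k - j) (by omega), Nat.sub_sub_self hj, nsmul_eq_mul] at this
  exact pos_of_mul_pos_right this (Nat.cast_nonneg _)

lemma mem_gammaCone_of_cons_mem {k : ℕ} {a : ℝ} {M : Multiset ℝ}
    (h : a ::ₘ M ∈ gammaCone (k + 1)) : M ∈ gammaCone k := by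
  have hk := le_card_of_mem_gammaCone h
  rw [Multiset.card_cons] at hk
  have hlc : 0 < (M.map fun r => X + C r).prod.leadingCoeff := by
    rw [(monic_multiset_prod_X_add_C M).leadingCoeff]; exact one_pos
  refine mem_gammaCone_of_roots_neg (by omega) <|
    roots_iterate_derivative_neg_of_X_add_C_mul (splits_multiset_prod_X_add_C M) hlc (a := a)
      fun t ht => ?_
  have := eval_iterate_derivative_pos_of_mem_gammaCone h ht
  rwa [Multiset.map_cons, Multiset.prod_cons, Multiset.card_cons, Nat.add_sub_add_right] at this

lemma mem_gammaCone_of_add_mem {k : ℕ} {N R : Multiset ℝ}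
    (h : N + R ∈ gammaCone (k + Multiset.card R)) : N ∈ gammaCone k := by
  induction R using Multiset.induction_on generalizing k with
  | empty => simpa using h
  | cons a R ih =>
    rw [Multiset.add_cons, Multiset.card_cons, ← add_assoc] at h
    exact ih (mem_gammaCone_of_cons_mem h)

theorem sum_pos_of_le_of_mem_gammaCone {k : ℕ} {M N : Multiset ℝ} (hM : M ∈ gammaCone (k + 1))
    (hNM : N ≤ M) (hcard : Multiset.card M = Multiset.card N + k) : 0 < N.sum := by
  obtain ⟨R, rfl⟩ := Multiset.le_iff_exists_add.1 hNM
  rw [Multiset.card_add, Nat.add_left_cancel_iff] at hcard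
  have hN : N ∈ gammaCone 1 := mem_gammaCone_of_add_mem (by rwa [hcard, add_comm])
  simpa [Multiset.esymm_one] using hN 1 le_rfl

/-- If `β ∈ Γ_k ⊂ ℝⁿ`, then the sum of any `n - k + 1` of its coordinates is
nonnegative. -/
theorem sum_nonneg_of_gammaCone (n k : ℕ) (β : Fin n → ℝ)
    (hΓ : ∀ j, 1 ≤ j → j ≤ k → 0 < esym n j β)
    (s : Finset (Fin n)) (hs : s.card = n - k + 1) :
    0 ≤ ∑ i ∈ s, β i := by
  obtain ⟨k, rfl⟩ : ∃ k', k = k' + 1 := Nat.exists_eq_add_one.2 <| Nat.pos_of_ne_zero <| by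
    rintro rfl
    simpa [hs] using s.card_le_univ
  have hM : univ.val.map β ∈ gammaCone (k + 1) := by
    intro j hj
    rcases Nat.eq_zero_or_pos j with rfl | hj0
    · simp
    · rw [Finset.esymm_map_val]; exact hΓ j hj0 hj
  have hkn := le_card_of_mem_gammaCone hM
  simp only [Multiset.card_map, card_val, card_univ, Fintype.card_fin] at hkn
  refine (sum_pos_of_le_of_mem_gammaCone hM (Multiset.map_le_map (val_le_iff.2 (subset_univ s)))
    ?_).le
  simp only [Multiset.card_map, card_val, card_univ, Fintype.card_fin, hs]
  omega
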